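/- Let d be a positive integer, w₁, w₂, w₃, w₄, b real numbers, and σ : ℝ → ℝ an arbitrary function. Define f : ℝ^{d×d} → ℝ^{d×d} by f(X) = σ(w₁ X + w₂ 11ᵀ X + w₃ X 11ᵀ + w₄ 11ᵀ X 11ᵀ + b 11ᵀ), with σ applied entrywise. Then f(P X Qᵀ) = P f(X) Qᵀ for all d×d permutation matrices P, Q and all X ∈ ℝ^{d×d}; in particular f(P X Pᵀ) = P f(X) Pᵀ for every permutation matrix P. -/

import Mathlib

open Matrix

/-- The `d × d` permutation matrix of a permutation `π`, with `P i j = 1` iff `i = π j`. -/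
noncomputable def permMat (d : ℕ) (π : Equiv.Perm (Fin d)) : Matrix (Fin d) (Fin d) ℝ :=
  Matrix.of fun i j => if i = π j then (1 : ℝ) else 0

/-- The `d × d` all-ones matrix `11ᵀ`. -/
noncomputable def onesMat (d : ℕ) : Matrix (Fin d) (Fin d) ℝ :=
  Matrix.of fun _ _ => (1 : ℝ)

/-!
Multiplying by permutation matrices on both sides, `X ↦ P X Qᵀ`, only reindexes the entries of
`X`. The all-ones matrix is invariant under reindexing, so each of the five terms inside `σ`
is reindexed the same way as `X`, and so is the entrywise application of `σ`.
-/

lemma permMat_eq_permMatrix {d : ℕ} (π : Equiv.Perm (Fin d)) :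
    permMat d π = (π⁻¹).permMatrix ℝ := by
  ext i j
  simp [permMat, PEquiv.toMatrix_apply, Equiv.Perm.inv_def, Equiv.eq_symm_apply, eq_comm]

lemma permMat_mul_mul_transpose {d : ℕ} (π τ : Equiv.Perm (Fin d))
    (X : Matrix (Fin d) (Fin d) ℝ) :
    permMat d π * X * (permMat d τ)ᵀ = X.submatrix π.symm τ.symm := by
  rw [permMat_eq_permMatrix, permMat_eq_permMatrix, transpose_permMatrix, inv_inv,
    PEquiv.toMatrix_toPEquiv_mul, PEquiv.mul_toMatrix_toPEquiv, submatrix_submatrix]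
  rfl

lemma onesMat_submatrix {d : ℕ} (e f : Fin d → Fin d) : (onesMat d).submatrix e f = onesMat d :=
  rfl

lemma onesMat_mul_submatrix {d : ℕ} (e f : Equiv.Perm (Fin d)) (X : Matrix (Fin d) (Fin d) ℝ) :
    onesMat d * X.submatrix e f = (onesMat d * X).submatrix e f := by
  rw [← submatrix_mul_equiv (onesMat d) X e e f, onesMat_submatrix]

lemma submatrix_mul_onesMat {d : ℕ} (e f : Equiv.Perm (Fin d)) (X : Matrix (Fin d) (Fin d) ℝ) :
    X.submatrix e f * onesMat d = (X * onesMat d).submatrix e f := by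
  rw [← submatrix_mul_equiv X (onesMat d) e f f, onesMat_submatrix]

lemma exchangeable_preactivation_submatrix {d : ℕ} (w1 w2 w3 w4 b : ℝ)
    (e f : Equiv.Perm (Fin d)) (X : Matrix (Fin d) (Fin d) ℝ) :
    w1 • X.submatrix e f + w2 • (onesMat d * X.submatrix e f)
        + w3 • (X.submatrix e f * onesMat d)
        + w4 • (onesMat d * X.submatrix e f * onesMat d) + b • onesMat d
      = (w1 • X + w2 • (onesMat d * X) + w3 • (X * onesMat d)
        + w4 • (onesMat d * X * onesMat d) + b • onesMat d).submatrix e f := by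
  simp only [onesMat_mul_submatrix, submatrix_mul_onesMat]
  rfl

theorem stmt_3_general (d : ℕ) (w1 w2 w3 w4 b : ℝ) (σ : ℝ → ℝ)
    (f : Matrix (Fin d) (Fin d) ℝ → Matrix (Fin d) (Fin d) ℝ)
    (hf : ∀ X, f X = Matrix.of fun i j =>
        σ ((w1 • X + w2 • (onesMat d * X) + w3 • (X * onesMat d)
            + w4 • (onesMat d * X * onesMat d) + b • onesMat d) i j)) :
    (∀ (π τ : Equiv.Perm (Fin d)) (X : Matrix (Fin d) (Fin d) ℝ),
        f (permMat d π * X * (permMat d τ)ᵀ) = permMat d π * f X * (permMat d τ)ᵀ) ∧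
    (∀ (π : Equiv.Perm (Fin d)) (X : Matrix (Fin d) (Fin d) ℝ),
        f (permMat d π * X * (permMat d π)ᵀ) = permMat d π * f X * (permMat d π)ᵀ) := by
  have equivariant : ∀ (π τ : Equiv.Perm (Fin d)) (X : Matrix (Fin d) (Fin d) ℝ),
      f (permMat d π * X * (permMat d τ)ᵀ) = permMat d π * f X * (permMat d τ)ᵀ := by
    intro π τ X
    rw [permMat_mul_mul_transpose, permMat_mul_mul_transpose, hf, hf,
      exchangeable_preactivation_submatrix]
    rfl
  exact ⟨equivariant, fun π => equivariant π π⟩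

/-- The exchangeable matrix layer
`f(X) = σ(w₁ X + w₂ 11ᵀ X + w₃ X 11ᵀ + w₄ 11ᵀ X 11ᵀ + b 11ᵀ)` (with `σ` applied entrywise)
satisfies `f (P X Qᵀ) = P (f X) Qᵀ` for all permutation matrices `P, Q`; in particular
`f (P X Pᵀ) = P (f X) Pᵀ` for every permutation matrix `P`. -/
theorem stmt_3 (d : ℕ) (hd : 0 < d) (w1 w2 w3 w4 b : ℝ) (σ : ℝ → ℝ)
    (f : Matrix (Fin d) (Fin d) ℝ → Matrix (Fin d) (Fin d) ℝ)
    (hf : ∀ X, f X = Matrix.of fun i j =>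
        σ ((w1 • X + w2 • (onesMat d * X) + w3 • (X * onesMat d)
            + w4 • (onesMat d * X * onesMat d) + b • onesMat d) i j)) :
    (∀ (π τ : Equiv.Perm (Fin d)) (X : Matrix (Fin d) (Fin d) ℝ),
        f (permMat d π * X * (permMat d τ)ᵀ) = permMat d π * f X * (permMat d τ)ᵀ) ∧
    (∀ (π : Equiv.Perm (Fin d)) (X : Matrix (Fin d) (Fin d) ℝ),
        f (permMat d π * X * (permMat d π)ᵀ) = permMat d π * f X * (permMat d π)ᵀ) :=
  stmt_3_general d w1 w2 w3 w4 b σ f hf
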